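/- arXiv:math/0405212 — 3 statements merged into one kernel-verified Lean document; each statement's English description precedes it below -/
import Mathlib

section
/- Let X and Y be topological spaces and let f : X → Y be an [L]-soft map. Then X is an absolute extensor in dimension [L] for the class of Polish spaces if and only if Y is an absolute extensor in dimension [L] for the class of Polish spaces. -/
open Set TopologicalSpace Topology

/-- `IsAE X W`: `W` is an absolute extensor of `X`, i.e. every continuous map from a
closed subspace of `X` into `W` extends continuously over `X`. -/
def IsAE (X : Type*) [TopologicalSpace X] (W : Type*) [TopologicalSpace W] : Prop :=
  ∀ A : Set X, IsClosed A → ∀ f : C(A, W), ∃ g : C(X, W), ∀ a : A, g a = f a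

/-- `edimLE X L`: the extension dimension of `X` is at most `[L]`, i.e. `L ∈ AE(X)`. -/
def edimLE (X : Type*) [TopologicalSpace X] (L : Type*) [TopologicalSpace L] : Prop :=
  IsAE X L

/-- `W ∈ AE([L], 𝒫)`: `W` is an absolute extensor in dimension `[L]` for Polish spaces. -/
def AEPolish (L : Type*) [TopologicalSpace L] (W : Type*) [TopologicalSpace W] : Prop :=
  ∀ (Z : Type) [TopologicalSpace Z] [PolishSpace Z], edimLE Z L → IsAE Z W

/-- The pair `V ⊆ U` is `X`-connected: every continuous map of a closed subspace of `X`
into `V` extends to a continuous map of `X` into `U`. -/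
def XConnectedPair (X : Type*) [TopologicalSpace X] (U : Type*) [TopologicalSpace U]
    (V : Set U) : Prop :=
  ∀ A : Set X, IsClosed A → ∀ f : C(A, V), ∃ g : C(X, U), ∀ a : A, g a = (f a : U)

/-- The pair `V ⊆ U` is `[L]`-connected with respect to Polish spaces. -/
def LConnPolish (L : Type*) [TopologicalSpace L] (U : Type*) [TopologicalSpace U]
    (V : Set U) : Prop :=
  ∀ (Z : Type) [TopologicalSpace Z] [PolishSpace Z], edimLE Z L → XConnectedPair Z U V

/-- `f` is an `[L]`-soft map. -/
def IsLSoft (L : Type*) [TopologicalSpace L] {X Y : Type*} [TopologicalSpace X]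
    [TopologicalSpace Y] (f : C(X, Y)) : Prop :=
  ∀ (Z : Type) [TopologicalSpace Z] [PolishSpace Z], edimLE Z L →
    ∀ A : Set Z, IsClosed A → ∀ g : C(Z, Y), ∀ h : C(A, X),
      (∀ a : A, f (h a) = g a) →
      ∃ hbar : C(Z, X), (∀ a : A, hbar a = h a) ∧ ∀ z : Z, f (hbar z) = g z


/-- `edimLE` passes to closed subspaces. -/
lemma edimLE_closed {Z : Type} [TopologicalSpace Z] {L : Type} [TopologicalSpace L]
    (hZ : edimLE Z L) {A : Set Z} (hA : IsClosed A) : edimLE A L := by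
  intro B hB g
  have hBZ : IsClosed (Subtype.val '' B : Set Z) :=
    hA.isClosedEmbedding_subtypeVal.isClosedMap _ hB
  -- map from the image into L
  have hmem : ∀ z : (Subtype.val '' B : Set Z), z.1 ∈ A := by
    rintro ⟨z, ⟨b, hb, rfl⟩⟩; exact b.2
  have hmem2 : ∀ z : (Subtype.val '' B : Set Z), (⟨z.1, hmem z⟩ : A) ∈ B := by
    rintro ⟨z, ⟨b, hb, rfl⟩⟩; exact hb
  let g' : C((Subtype.val '' B : Set Z), L) :=
    ⟨fun z => g ⟨⟨z.1, hmem z⟩, hmem2 z⟩, by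
      apply g.continuous.comp
      apply Continuous.subtype_mk
      exact (continuous_subtype_val.subtype_mk _)⟩
  obtain ⟨G, hG⟩ := hZ _ hBZ g'
  refine ⟨⟨fun a => G a.1, G.continuous.comp continuous_subtype_val⟩, ?_⟩
  intro b
  have := hG ⟨b.1.1, ⟨b.1, b.2, rfl⟩⟩
  simpa [g'] using this

/-- if `f : X → Y` is `[L]`-soft then `X ∈ AE([L],𝒫)` iff `Y ∈ AE([L],𝒫)`. -/
theorem statement0 (L X Y : Type) [TopologicalSpace L] [TopologicalSpace X]
    [TopologicalSpace Y] (f : C(X, Y)) (hf : IsLSoft L f) :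
    AEPolish L X ↔ AEPolish L Y := by
  constructor
  · -- X ∈ AE([L],𝒫) → Y ∈ AE([L],𝒫)
    intro hX Z _ _ hZ A hA g
    haveI : PolishSpace A := hA.polishSpace
    have hAL : edimLE A L := edimLE_closed hZ hA
    -- restrict g to A and lift through f using softness with empty closed set
    have hE : IsClosed (∅ : Set A) := isClosed_empty
    let h0 : C((∅ : Set A), X) :=
      ⟨fun a => (Set.notMem_empty _ a.2).elim, by
        have : IsEmpty (∅ : Set A) := by
          simp [Set.isEmpty_coe_sort]
        exact continuous_of_const fun a => isEmptyElim a⟩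
    obtain ⟨hbar, _, hlift⟩ := hf A hAL ∅ hE g h0 (fun a => (Set.notMem_empty _ a.2).elim)
    obtain ⟨G, hG⟩ := hX Z hZ A hA hbar
    exact ⟨⟨fun z => f (G z), f.continuous.comp G.continuous⟩,
      fun a => by simp [hG a, hlift a]⟩
  · -- Y ∈ AE([L],𝒫) → X ∈ AE([L],𝒫)
    intro hY Z _ _ hZ A hA g0
    let g1 : C(A, Y) := ⟨fun a => f (g0 a), f.continuous.comp g0.continuous⟩
    obtain ⟨G, hG⟩ := hY Z hZ A hA g1
    obtain ⟨hbar, hext, _⟩ := hf Z hZ A hA G g0 (fun a => (hG a).symm)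
    exact ⟨hbar, hext⟩
end

section
/- Let L be a countable locally finite CW complex possessing the connected pairs property with respect to Polish spaces, and let X be a compactum (compact Hausdorff space). Suppose that each pair K ⊆ C of metrizable compacta with e-dim C ≤ [L] that is [L]-connected with respect to Polish spaces is X-connected. Then for every metrizable space Y with e-dim Y ≤ [L] which is an absolute extensor in dimension [L] for metrizable compacta, we have Y ∈ AE(X). -/
open Set TopologicalSpace Topology

/-- `L` possesses the connected pairs property with respect to Polish spaces: every
metrizable compactum `K` with `e-dim K ≤ [L]` embeds in a metrizable compactum `C` with
`e-dim C ≤ [L]` such that the pair `K ⊆ C` is `[L]`-connected with respect to Polish spaces. -/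
def ConnectedPairsProperty (L : Type) [TopologicalSpace L] : Prop :=
  ∀ (K : Type) [TopologicalSpace K] [CompactSpace K] [MetrizableSpace K],
    edimLE K L →
    ∃ C : TopCat.{0}, CompactSpace C ∧ MetrizableSpace C ∧ edimLE C L ∧
      ∃ e : K → C, IsEmbedding e ∧ LConnPolish L C (Set.range e)

/- The image `K = f(A)` of the map to be extended is a metrizable compactum with
`e-dim K ≤ [L]`, being closed in `Y`. Enlarge it to the compactum `C` given by the connected
pairs property: by hypothesis the pair `K ⊆ C` is `X`-connected, so `f` extends to
`g : X → C`, and since `Y ∈ AE(C)` the inclusion `K ↪ Y` extends to `h : C → Y`.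
Then `h ∘ g` extends `f`. -/

theorem IsAE.exists_comp_eq_of_isClosedEmbedding {Y W K : Type*} [TopologicalSpace Y]
    [TopologicalSpace W] [TopologicalSpace K] (hY : IsAE Y W) {i : K → Y}
    (hi : IsClosedEmbedding i) (φ : C(K, W)) : ∃ g : C(Y, W), ∀ k, g (i k) = φ k := by
  let ψ : C(range i, W) := φ.comp ⟨_, hi.isEmbedding.toHomeomorph.symm.continuous⟩
  obtain ⟨g, hg⟩ := hY (range i) hi.isClosed_range ψ
  exact ⟨g, fun k => (hg ⟨i k, mem_range_self k⟩).trans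
    (congrArg φ (hi.isEmbedding.toHomeomorph_symm_apply k))⟩

theorem IsAE.of_isClosedEmbedding {Y W K : Type*} [TopologicalSpace Y]
    [TopologicalSpace W] [TopologicalSpace K] (hY : IsAE Y W) {i : K → Y}
    (hi : IsClosedEmbedding i) : IsAE K W := by
  intro A hA f
  obtain ⟨g, hg⟩ :=
    hY.exists_comp_eq_of_isClosedEmbedding (hi.comp hA.isClosedEmbedding_subtypeVal) f
  exact ⟨g.comp ⟨i, hi.continuous⟩, hg⟩

theorem XConnectedPair.exists_extension_of_isEmbedding {X U K : Type*} [TopologicalSpace X]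
    [TopologicalSpace U] [TopologicalSpace K] {e : K → U} (he : IsEmbedding e)
    (hX : XConnectedPair X U (range e)) {A : Set X} (hA : IsClosed A) (f : C(A, K)) :
    ∃ g : C(X, U), ∀ a : A, g a = e (f a) :=
  hX A hA ⟨fun a => ⟨e (f a), mem_range_self _⟩, (he.continuous.comp f.continuous).subtype_mk _⟩

theorem statement4_general (L : Type) [TopologicalSpace L] (hL : ConnectedPairsProperty L)
    (X : Type) [TopologicalSpace X] [CompactSpace X]
    (hpairs : ∀ (C : Type) [TopologicalSpace C] [CompactSpace C] [MetrizableSpace C]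
      (K : Set C), IsClosed K → edimLE C L → LConnPolish L C K → XConnectedPair X C K)
    (Y : Type) [TopologicalSpace Y] [MetrizableSpace Y] (hY : edimLE Y L)
    (hYAE : ∀ (K : Type) [TopologicalSpace K] [CompactSpace K] [MetrizableSpace K],
      edimLE K L → IsAE K Y) :
    IsAE X Y := by
  intro A hA f
  have : CompactSpace A := isCompact_iff_compactSpace.mp hA.isCompact
  have hK : IsCompact (range f) := isCompact_range f.continuous
  have : CompactSpace (range f) := isCompact_iff_compactSpace.mp hK
  have hedimK : edimLE (range f) L :=
    IsAE.of_isClosedEmbedding hY hK.isClosed.isClosedEmbedding_subtypeVal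
  obtain ⟨C, _, _, hedimC, e, he, hconn⟩ := hL (range f) hedimK
  have he' : IsClosedEmbedding e := he.continuous.isClosedEmbedding he.injective
  obtain ⟨g, hg⟩ := (hpairs C _ he'.isClosed_range hedimC hconn).exists_extension_of_isEmbedding
    he hA ⟨_, f.continuous.rangeFactorization⟩
  obtain ⟨h, hh⟩ := (hYAE C hedimC).exists_comp_eq_of_isClosedEmbedding he'
    ⟨Subtype.val, continuous_subtype_val⟩
  exact ⟨h.comp g, fun a => by simp [hg, hh]⟩

theorem statement4 (L : Type) [TopologicalSpace L] (hL : ConnectedPairsProperty L)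
    (X : Type) [TopologicalSpace X] [CompactSpace X] [T2Space X]
    (hpairs : ∀ (C : Type) [TopologicalSpace C] [CompactSpace C] [MetrizableSpace C]
      (K : Set C), IsClosed K → edimLE C L → LConnPolish L C K → XConnectedPair X C K)
    (Y : Type) [TopologicalSpace Y] [MetrizableSpace Y] (hY : edimLE Y L)
    (hYAE : ∀ (K : Type) [TopologicalSpace K] [CompactSpace K] [MetrizableSpace K],
      edimLE K L → IsAE K Y) :
    IsAE X Y :=
  statement4_general L hL X hpairs Y hY hYAE
end

section
/- Let Σ be a finite open cover of a space X and let s_0, …, s_n ∈ Σ have nonempty intersection. Define the closed n-simplex [s_0,…,s_n] = (⋃_{i=0}^n s_i) \ ⋃{ s ∈ Σ : s ≠ s_i for all i } and its interior ⟨s_0,…,s_n⟩ = (⋂_{i=0}^n s_i) ∩ Σ^(n). Then [s_0,…,s_n] = ⋃_{m=0}^n [s_0,…,ŝ_m,…,s_n] ∪ ⟨s_0,…,s_n⟩, where ŝ_m denotes omission of s_m. Moreover, the interiors of distinct n-simplices are pairwise disjoint, and Σ^(n) = ⋃{ ⟨s_{i_0},…,s_{i_n}⟩ : ⋂_k s_{i_k}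 ≠ ∅ } ∪ Σ^(n−1). -/
open Set TopologicalSpace Topology

variable (X : Type) [TopologicalSpace X]

/-- The order of the cover `S` at the point `x`. -/
noncomputable def ordAt (S : Finset (Set X)) (x : X) : ℕ :=
  {s : Set X | s ∈ S ∧ x ∈ s}.ncard

/-- The `k`-skeleton of the cover `S`: points of order at most `k + 1`. -/
def skel (S : Finset (Set X)) (k : ℕ) : Set X :=
  {x : X | ordAt X S x ≤ k + 1}

/-- The "closed simplex" spanned by the members `s i` of the cover `S`. -/
def csimplex (S : Finset (Set X)) {ι : Type} (s : ι → Set X) : Set X :=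
  (⋃ i, s i) \ ⋃₀ {t : Set X | t ∈ S ∧ ∀ i, t ≠ s i}

/-- The "interior" of the `n`-simplex spanned by the `s i`. -/
def sinterior (S : Finset (Set X)) (n : ℕ) {ι : Type} (s : ι → Set X) : Set X :=
  (⋂ i, s i) ∩ skel X S n

lemma mem_csimplex_iff (S : Finset (Set X)) (hcover : ⋃₀ (S : Set (Set X)) = Set.univ)
    {ι : Type} {s : ι → Set X} (x : X) :
    x ∈ csimplex X S s ↔ ∀ t ∈ S, x ∈ t → ∃ i, t = s i := by
  constructor
  · rintro ⟨_, h2⟩ t htS hxt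
    by_contra hc
    push_neg at hc
    exact h2 ⟨t, ⟨htS, fun i => hc i⟩, hxt⟩
  · intro h
    have hx : x ∈ ⋃₀ (S : Set (Set X)) := hcover ▸ Set.mem_univ x
    obtain ⟨t, htS, hxt⟩ := hx
    obtain ⟨i, rfl⟩ := h t htS hxt
    refine ⟨Set.mem_iUnion.2 ⟨i, hxt⟩, ?_⟩
    rintro ⟨u, ⟨huS, hne⟩, hxu⟩
    obtain ⟨j, rfl⟩ := h u huS hxu
    exact hne j rfl

lemma ncard_range_fin {n : ℕ} {σ : Fin (n + 1) → Set X} (hinj : Function.Injective σ) :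
    (Set.range σ).ncard = n + 1 := by
  rw [← Nat.card_coe_set_eq, Nat.card_range_of_injective hinj, Nat.card_eq_fintype_card,
    Fintype.card_fin]

lemma range_eq_orderSet {S : Finset (Set X)} {x : X} {n : ℕ} {σ : Fin (n + 1) → Set X}
    (hσ : ∀ i, σ i ∈ S) (hinj : Function.Injective σ) (hx : ∀ i, x ∈ σ i)
    (hord : ordAt X S x ≤ n + 1) :
    Set.range σ = {t : Set X | t ∈ S ∧ x ∈ t} := by
  have hfin : {t : Set X | t ∈ S ∧ x ∈ t}.Finite :=
    S.finite_toSet.subset fun t ht => ht.1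
  refine Set.eq_of_subset_of_ncard_le ?_ ?_ hfin
  · rintro t ⟨i, rfl⟩; exact ⟨hσ i, hx i⟩
  · rw [ncard_range_fin X hinj]; exact hord

/-- decomposition of a closed simplex into its boundary faces and interior;
disjointness of interiors of distinct simplices; decomposition of the `n`-skeleton. -/
theorem statement7 (S : Finset (Set X)) (hopen : ∀ s ∈ S, IsOpen s)
    (hcover : ⋃₀ (S : Set (Set X)) = Set.univ) (n : ℕ)
    (s : Fin (n + 1) → Set X) (hs : ∀ i, s i ∈ S) (hinj : Function.Injective s)
    (hne : (⋂ i, s i).Nonempty) :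
    (csimplex X S s =
        (⋃ m : Fin (n + 1), csimplex X S (fun i : Fin n => s (m.succAbove i))) ∪
          sinterior X S n s) ∧
    (∀ σ τ : Fin (n + 1) → Set X, (∀ i, σ i ∈ S) → (∀ i, τ i ∈ S) →
      Function.Injective σ → Function.Injective τ →
      (⋂ i, σ i).Nonempty → (⋂ i, τ i).Nonempty → Set.range σ ≠ Set.range τ →
      Disjoint (sinterior X S n σ) (sinterior X S n τ)) ∧
    skel X S n =
      (⋃ σ ∈ {σ : Fin (n + 1) → Set X |
          (∀ i, σ i ∈ S) ∧ Function.Injective σ ∧ (⋂ i, σ i).Nonempty},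
        sinterior X S n σ) ∪ {x : X | ordAt X S x ≤ n} := by
  have hfinAx : ∀ x : X, {t : Set X | t ∈ S ∧ x ∈ t}.Finite := fun x =>
    S.finite_toSet.subset fun t ht => ht.1
  refine ⟨?_, ?_, ?_⟩
  · ext x
    rw [mem_csimplex_iff X S hcover]
    constructor
    · intro h
      by_cases hall : ∀ i, x ∈ s i
      · refine Or.inr ⟨Set.mem_iInter.2 hall, ?_⟩
        show ordAt X S x ≤ n + 1
        have hsub : {t : Set X | t ∈ S ∧ x ∈ t} ⊆ Set.range s := by
          rintro t ⟨htS, hxt⟩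
          obtain ⟨i, rfl⟩ := h t htS hxt
          exact ⟨i, rfl⟩
        calc ordAt X S x ≤ (Set.range s).ncard :=
              Set.ncard_le_ncard hsub (Set.finite_range s)
          _ = n + 1 := ncard_range_fin X hinj
      · push_neg at hall
        obtain ⟨m, hm⟩ := hall
        refine Or.inl (Set.mem_iUnion.2 ⟨m, ?_⟩)
        rw [mem_csimplex_iff X S hcover]
        intro t htS hxt
        obtain ⟨i, rfl⟩ := h t htS hxt
        have : i ≠ m := fun hin => hm (hin ▸ hxt)
        obtain ⟨j, hj⟩ := Fin.exists_succAbove_eq this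
        exact ⟨j, by rw [hj]⟩
    · rintro (hx | hx)
      · obtain ⟨m, hm⟩ := Set.mem_iUnion.1 hx
        rw [mem_csimplex_iff X S hcover] at hm
        intro t htS hxt
        obtain ⟨j, rfl⟩ := hm t htS hxt
        exact ⟨m.succAbove j, rfl⟩
      · obtain ⟨hx1, hx2⟩ := hx
        intro t htS hxt
        have := range_eq_orderSet X hs hinj (Set.mem_iInter.1 hx1) hx2
        have ht : t ∈ Set.range s := this ▸ (⟨htS, hxt⟩ : t ∈ {t : Set X | t ∈ S ∧ x ∈ t})
        obtain ⟨i, rfl⟩ := ht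
        exact ⟨i, rfl⟩
  · intro σ τ hσ hτ hσi hτi _ _ hrange
    rw [Set.disjoint_left]
    rintro x ⟨hx1, hx2⟩ ⟨hy1, hy2⟩
    exact hrange ((range_eq_orderSet X hσ hσi (Set.mem_iInter.1 hx1) hx2).trans
      (range_eq_orderSet X hτ hτi (Set.mem_iInter.1 hy1) hy2).symm)
  · ext x
    constructor
    · intro hx
      rcases Nat.lt_or_ge (ordAt X S x) (n + 1) with hlt | hge
      · exact Or.inr (Nat.lt_succ_iff.1 hlt)
      · have heq : ordAt X S x = n + 1 := le_antisymm hx hge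
        left
        have hfin := hfinAx x
        have hcard : hfin.toFinset.card = n + 1 := by
          rw [← Set.ncard_eq_toFinset_card _ hfin]; exact heq
        let e := hfin.toFinset.equivFinOfCardEq hcard
        set σ : Fin (n + 1) → Set X := fun i => ((e.symm i : hfin.toFinset) : Set X) with hσdef
        have hmem : ∀ i, σ i ∈ {t : Set X | t ∈ S ∧ x ∈ t} := fun i => by
          have := (e.symm i).2
          rw [Set.Finite.mem_toFinset] at this
          exact this
        have hinjσ : Function.Injective σ := fun i j hij => by
          apply e.symm.injective
          exact Subtype.ext hij
        refine Set.mem_iUnion₂.2 ⟨σ, ⟨fun i => (hmem i).1, hinjσ, ⟨x, Set.mem_iInter.2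
          fun i => (hmem i).2⟩⟩, Set.mem_iInter.2 fun i => (hmem i).2, hx⟩
    · rintro (hx | hx)
      · obtain ⟨σ, _, _, h2⟩ := Set.mem_iUnion₂.1 hx
        exact h2
      · exact le_trans hx (Nat.le_succ n)
end
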